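/- Let F ⊆ 2^[n] be a family such that |A △ B| ∈ {2, 4, ..., 2k} for all distinct A, B ∈ F (all symmetric differences are even and at most 2k). Then |F| ≤ ∑_{i=0}^{k} C(n, i) − |S|, where S is the set of k-element subsets of [n] not contained in any member of F. -/

import Mathlib

/-!
For `A ∈ F` put `f_A(X) = ∏_{j=1}^k (2j - |A △ X|)`. Since `|A △ X|` is affine in the
coordinates `[i ∈ X]`, each `f_A` lies in the span of the functions `X ↦ [T ⊆ X]` with `|T| ≤ k`,
whose dimension is at most `∑_{i ≤ k} C(n, i)`. The `f_A` together with the functions `[T ⊆ ·]`,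
`T ∈ S`, are linearly independent: `f_A` vanishes on `F \ {A}` but not at `A`, and `[T ⊆ ·]`
vanishes on `F` and on `S \ {T}`, so evaluating at the members of `S` and then of `F` gives a
triangular system.
-/

open Finset Module Submodule

/-- Evaluate a vanishing combination at `p m`, for `m` of maximal key among the indices with
nonzero coefficient. -/
theorem linearIndependent_of_eval_triangular {ι β K κ : Type*} [Ring K] [NoZeroDivisors K]
    [LinearOrder κ]
    (v : ι → β → K) (p : ι → β) (key : ι → κ) (hdiag : ∀ i, v i (p i) ≠ 0)
    (hoff : ∀ i j, i ≠ j → key i ≤ key j → v i (p j) = 0) : LinearIndependent K v := by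
  classical
  rw [linearIndependent_iff']
  intro s g hsum
  by_contra! hne
  obtain ⟨m, hm, hmax⟩ := (s.filter (g · ≠ 0)).exists_max_image key
    (by simpa [Finset.Nonempty] using hne)
  rw [mem_filter] at hm
  have heval : ∑ i ∈ s, g i * v i (p m) = 0 := by simpa using congrFun hsum (p m)
  rw [sum_eq_single m (fun i hi him => ?_) (fun h => absurd hm.1 h)] at heval
  · exact mul_ne_zero hm.2 (hdiag m) heval
  · by_cases hgi : g i = 0
    · rw [hgi, zero_mul]
    · rw [hoff i m him (hmax i (mem_filter.2 ⟨hi, hgi⟩)), mul_zero]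

section LowDegree

variable (K : Type*) [CommRing K] (α : Type*) [DecidableEq α]

def subsetIndicator {α : Type*} [DecidableEq α] (T : Finset α) : Finset α → K :=
  fun X => if T ⊆ X then 1 else 0

/-- Functions on `Finset α` that are polynomials of degree at most `d` in the coordinates
`X ↦ [i ∈ X]`. -/
def lowDegreeSpan (d : ℕ) : Submodule K (Finset α → K) :=
  span K (subsetIndicator K '' {T | #T ≤ d})

variable {K α}

theorem subsetIndicator_mul (T U : Finset α) :
    subsetIndicator K T * subsetIndicator K U = subsetIndicator K (T ∪ U) := by
  funext X
  simp only [subsetIndicator, Pi.mul_apply, union_subset_iff]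
  split_ifs <;> simp_all

theorem subsetIndicator_mem_lowDegreeSpan {d : ℕ} {T : Finset α} (hT : #T ≤ d) :
    subsetIndicator K T ∈ lowDegreeSpan K α d :=
  subset_span ⟨T, hT, rfl⟩

theorem one_mem_lowDegreeSpan (d : ℕ) : (1 : Finset α → K) ∈ lowDegreeSpan K α d := by
  convert subsetIndicator_mem_lowDegreeSpan (K := K) (d := d) (T := (∅ : Finset α)) (by simp)
  funext X
  simp [subsetIndicator]

theorem mul_mem_lowDegreeSpan {d e : ℕ} {f g : Finset α → K} (hf : f ∈ lowDegreeSpan K α d)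
    (hg : g ∈ lowDegreeSpan K α e) : f * g ∈ lowDegreeSpan K α (d + e) := by
  refine (?_ : lowDegreeSpan K α d * lowDegreeSpan K α e ≤ _) (mul_mem_mul hf hg)
  rw [lowDegreeSpan, lowDegreeSpan, span_mul_span, span_le]
  rintro _ ⟨_, ⟨T, hT, rfl⟩, _, ⟨U, hU, rfl⟩, rfl⟩
  change subsetIndicator K T * subsetIndicator K U ∈ lowDegreeSpan K α (d + e)
  rw [subsetIndicator_mul]
  exact subsetIndicator_mem_lowDegreeSpan ((card_union_le T U).trans (add_le_add hT hU))

theorem prod_mem_lowDegreeSpan {ι : Type*} {s : Finset ι} {g : ι → Finset α → K}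
    (hg : ∀ i ∈ s, g i ∈ lowDegreeSpan K α 1) : ∏ i ∈ s, g i ∈ lowDegreeSpan K α #s := by
  classical
  induction s using Finset.induction_on with
  | empty => exact one_mem_lowDegreeSpan 0
  | insert i s his ih =>
    rw [prod_insert his, card_insert_of_notMem his, add_comm]
    exact mul_mem_lowDegreeSpan (hg i (mem_insert_self i s))
      (ih fun j hj => hg j (mem_insert_of_mem hj))

theorem card_symmDiff_mem_lowDegreeSpan [Fintype α] (A : Finset α) :
    (fun X => (#(symmDiff A X) : K)) ∈ lowDegreeSpan K α 1 := by
  have hsingle : ∀ i, subsetIndicator K {i} ∈ lowDegreeSpan K α 1 := fun i =>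
    subsetIndicator_mem_lowDegreeSpan (card_singleton i).le
  have hsum : (fun X => (#(symmDiff A X) : K)) =
      ∑ i, if i ∈ A then 1 - subsetIndicator K {i} else subsetIndicator K {i} := by
    funext X
    rw [← Finset.filter_univ_mem (symmDiff A X), Finset.card_filter, Nat.cast_sum,
      Finset.sum_apply]
    refine sum_congr rfl fun i _ => ?_
    by_cases hA : i ∈ A <;> by_cases hX : i ∈ X <;>
      simp [subsetIndicator, mem_symmDiff, hA, hX]
  rw [hsum]
  refine sum_mem fun i _ => ?_
  split_ifs
  · exact sub_mem (one_mem_lowDegreeSpan 1) (hsingle i)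
  · exact hsingle i

theorem prod_sub_card_symmDiff_mem_lowDegreeSpan [Fintype α] {ι : Type*} (s : Finset ι)
    (l : ι → K) (A : Finset α) :
    (fun X => ∏ j ∈ s, (l j - #(symmDiff A X))) ∈ lowDegreeSpan K α #s := by
  have hprod : (fun X => ∏ j ∈ s, (l j - #(symmDiff A X))) =
      ∏ j ∈ s, (l j • 1 - fun X => (#(symmDiff A X) : K)) := by
    funext X
    simp [Finset.prod_apply]
  rw [hprod]
  exact prod_mem_lowDegreeSpan fun j _ =>
    sub_mem (smul_mem _ _ (one_mem_lowDegreeSpan 1)) (card_symmDiff_mem_lowDegreeSpan A)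

theorem finrank_lowDegreeSpan_le [Nontrivial K] [Fintype α] (d : ℕ) :
    finrank K (lowDegreeSpan K α d) ≤ ∑ i ∈ range (d + 1), (Fintype.card α).choose i := by
  classical
  have hsub : univ.filter (fun T : Finset α => #T ≤ d) ⊆
      (range (d + 1)).biUnion fun i => powersetCard i univ := by
    intro T hT
    simp only [mem_filter, mem_univ, true_and] at hT
    simp [mem_biUnion, mem_powersetCard, hT]
  calc finrank K (lowDegreeSpan K α d)
      = finrank K (span K ((univ.filter (fun T : Finset α => #T ≤ d)).image
          (subsetIndicator K) : Set (Finset α → K))) := by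
        have hset : {T : Finset α | #T ≤ d} = ↑(univ.filter fun T : Finset α => #T ≤ d) := by
          ext; simp
        rw [lowDegreeSpan, hset, ← coe_image]
    _ ≤ #(univ.filter fun T : Finset α => #T ≤ d) :=
        (finrank_span_finset_le_card _).trans card_image_le
    _ ≤ ∑ i ∈ range (d + 1), #(powersetCard i (univ : Finset α)) :=
        (card_le_card hsub).trans card_biUnion_le
    _ = ∑ i ∈ range (d + 1), (Fintype.card α).choose i := by
        simp [card_powersetCard]

end LowDegree

section EvenDistance

variable (K : Type*) [CommRing K] {α : Type*} [DecidableEq α]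

def evenDistancePoly (k : ℕ) (A : Finset α) : Finset α → K :=
  fun X => ∏ j ∈ Icc 1 k, (2 * (j : K) - #(symmDiff A X))

variable {K}

theorem evenDistancePoly_mem_lowDegreeSpan [Fintype α] (k : ℕ) (A : Finset α) :
    evenDistancePoly K k A ∈ lowDegreeSpan K α k := by
  have h := prod_sub_card_symmDiff_mem_lowDegreeSpan (Icc 1 k) (fun j : ℕ => 2 * (j : K)) A
  rwa [Nat.card_Icc, Nat.add_sub_cancel] at h

theorem evenDistancePoly_self_ne_zero [NoZeroDivisors K] [CharZero K] (k : ℕ) (A : Finset α) :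
    evenDistancePoly K k A A ≠ 0 := by
  simp only [evenDistancePoly, symmDiff_self, bot_eq_empty, card_empty, Nat.cast_zero, sub_zero]
  refine prod_ne_zero_iff.2 fun j hj => mul_ne_zero two_ne_zero (Nat.cast_ne_zero.2 ?_)
  exact (Nat.one_le_iff_ne_zero.1 (mem_Icc.1 hj).1)

theorem evenDistancePoly_eq_zero {k j : ℕ} {A B : Finset α} (hj₁ : 1 ≤ j) (hj₂ : j ≤ k)
    (hAB : #(symmDiff A B) = 2 * j) : evenDistancePoly K k A B = 0 :=
  prod_eq_zero (mem_Icc.2 ⟨hj₁, hj₂⟩) (by rw [hAB]; push_cast; ring)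

theorem linearIndependent_evenDistancePoly_elim_subsetIndicator [IsDomain K] [CharZero K] {k : ℕ}
    {F S : Finset (Finset α)}
    (hF : ∀ A ∈ F, ∀ B ∈ F, A ≠ B → ∃ j, 1 ≤ j ∧ j ≤ k ∧ #(symmDiff A B) = 2 * j)
    (hS : ∀ T ∈ S, #T = k ∧ ∀ A ∈ F, ¬ T ⊆ A) :
    LinearIndependent K (Sum.elim (fun A : F => evenDistancePoly K k (A : Finset α))
      (fun T : S => subsetIndicator K (T : Finset α))) := by
  refine linearIndependent_of_eval_triangular _ (Sum.elim Subtype.val Subtype.val)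
    (Sum.elim (fun _ => (1 : ℕ)) (fun _ => 0)) ?_ ?_
  · rintro (A | T)
    · exact evenDistancePoly_self_ne_zero k A.1
    · simp [subsetIndicator]
  · rintro (⟨A, hA⟩ | ⟨T, hT⟩) (⟨B, hB⟩ | ⟨U, hU⟩) hne hkey
    · obtain ⟨j, hj₁, hj₂, hAB⟩ := hF A hA B hB (by simpa using hne)
      exact evenDistancePoly_eq_zero hj₁ hj₂ hAB
    · simp at hkey
    · simp [subsetIndicator, (hS T hT).2 B hB]
    · have hTU : ¬ T ⊆ U := fun h =>
        hne (by simpa using eq_of_subset_of_card_le h ((hS U hU).1.trans (hS T hT).1.symm).le)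
      simp [subsetIndicator, hTU]

end EvenDistance

theorem stmt_13 (n k : ℕ) (F : Finset (Finset (Fin n)))
    (hdiff : ∀ A ∈ F, ∀ B ∈ F, A ≠ B →
      ∃ j, 1 ≤ j ∧ j ≤ k ∧ (symmDiff A B).card = 2 * j) :
    F.card ≤ ∑ i ∈ Finset.range (k + 1), n.choose i -
      ((Finset.powersetCard k (Finset.univ : Finset (Fin n))).filter
        (fun T => ∀ A ∈ F, ¬ T ⊆ A)).card := by
  set S := (powersetCard k (univ : Finset (Fin n))).filter fun T => ∀ A ∈ F, ¬ T ⊆ A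
  have hS : ∀ T ∈ S, #T = k ∧ ∀ A ∈ F, ¬ T ⊆ A := fun T hT => by
    simpa [S, mem_powersetCard] using hT
  have hind := linearIndependent_evenDistancePoly_elim_subsetIndicator (K := ℝ) hdiff hS
  have hcard : #F + #S ≤ ∑ i ∈ range (k + 1), n.choose i :=
    calc #F + #S = finrank ℝ (span ℝ (Set.range _)) := by
          rw [finrank_span_eq_card hind, Fintype.card_sum, Fintype.card_coe, Fintype.card_coe]
      _ ≤ finrank ℝ (lowDegreeSpan ℝ (Fin n) k) := by
          refine Submodule.finrank_mono (span_le.2 (Set.range_subset_iff.2 ?_))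
          rintro (A | T)
          · exact evenDistancePoly_mem_lowDegreeSpan k A.1
          · exact subsetIndicator_mem_lowDegreeSpan (hS T T.2).1.le
      _ ≤ ∑ i ∈ range (k + 1), n.choose i :=
          (finrank_lowDegreeSpan_le k).trans_eq (by rw [Fintype.card_fin])
  omega
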